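/- Let d ≥ 1, n = 2^d, B : [n] → {−1,+1}^d a bijection, τ ∈ (0,1), X a measurable space, and D a probability measure on X × [n]. Then for every measurable f : X → R^d, er^ℓ_D[pred^BEP_τ ∘ f] − er^{ℓ,*}_D ≤ ( er^{ψ^BEP}_D[f] − er^{ψ^BEP,*}_D ) / ( 2 min(τ, 1−τ) ), where ℓ = ℓ^{1/2} is the abstain(1/2) loss. -/

import Mathlib

open scoped BigOperators
open MeasureTheory

/-- The abstain(1/2) loss is `abstainLoss n (1/2)`. -/
noncomputable def abstainLoss (n : ℕ) (α : ℝ) (y : Fin n) (t : Fin (n + 1)) : ℝ :=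
  if t = Fin.last n then α else if (t : ℕ) = (y : ℕ) then 0 else 1

/-- The BEP surrogate. `B : Fin (2^d) ≃ (Fin d → Bool)` encodes a bijection
`[n] → {−1,+1}^d`, where `true ↦ +1` and `false ↦ −1`:
`ψ^BEP(y,u) = ( max_{j∈[d]} B_j(y) u_j + 1 )_+`. -/
noncomputable def psiBEP (d : ℕ) (B : Fin (2 ^ d) ≃ (Fin d → Bool)) (y : Fin (2 ^ d))
    (u : Fin d → ℝ) : ℝ :=
  max ((⨆ j, (if B y j then (1 : ℝ) else -1) * u j) + 1) 0

/-- The coordinatewise sign vector of `−u`, where `sign(a) = +1` (`true`) if `a ≥ 0`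
and `−1` (`false`) if `a < 0`; so `sign(−u)_j = +1` iff `u j ≤ 0`. -/
noncomputable def signNeg (d : ℕ) (u : Fin d → ℝ) : Fin d → Bool :=
  fun j => decide (u j ≤ 0)

/-- `pred^BEP_τ(u)`: `n+1` if `min_j |u_j| ≤ τ`, and `B⁻¹(sign(−u))` otherwise. -/
noncomputable def predBEP (d : ℕ) (B : Fin (2 ^ d) ≃ (Fin d → Bool)) (τ : ℝ)
    (u : Fin d → ℝ) : Fin (2 ^ d + 1) :=
  if (⨅ j, |u j|) ≤ τ then Fin.last (2 ^ d)
  else Fin.castSucc (B.symm (signNeg d u))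

/-!
Everything rests on a pointwise trade-off. With `m = min τ (1 - τ)`, let `c_t ∈ ℝ^d` be the
vertex `B y` of a label `t = y` and `c_t = 0` for the abstain option `t = n + 1`, and move a
surrogate value `u` to `w = u - m (c_t - c_{pred u})`. Then for every label `y`
`2m ℓ(y, pred u) + ψ(y, w) ≤ ψ(y, u) + 2m ℓ(y, t)`:
`ψ(y, ·)` is `1`-Lipschitz for the sup norm, which covers the cases where the right-hand side
allows an increase, and in the others the score `max_j B_j(y) u_j` drops by the required amount,
because it is at least `-τ` when `pred` abstains and exceeds `τ` at every wrong label otherwise.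
For measurable `h` and `g = w(f, h)`, integrating gives
`2m (er^ℓ[pred ∘ f] - er^ℓ[h]) ≤ er^ψ[f] - er^ψ[g] ≤ er^ψ[f] - er^{ψ,*}`.
-/
open scoped ENNReal

noncomputable def boolSign (b : Bool) : ℝ := if b then 1 else -1

lemma boolSign_mul_boolSign (b c : Bool) :
    boolSign b * boolSign c = if b = c then 1 else -1 := by
  cases b <;> cases c <;> norm_num [boolSign]

lemma abs_boolSign (b : Bool) : |boolSign b| = 1 := by
  cases b <;> norm_num [boolSign]

lemma boolSign_mul_eq {d : ℕ} (b : Bool) (u : Fin d → ℝ) (j : Fin d) :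
    boolSign b * u j = if b = signNeg d u j then -|u j| else |u j| := by
  rcases le_or_gt (u j) 0 with hu | hu <;> cases b <;>
    simp [boolSign, signNeg, hu, not_le.2, abs_of_nonpos, abs_of_pos]

section Score

variable {d : ℕ} (B : Fin (2 ^ d) ≃ (Fin d → Bool)) (y : Fin (2 ^ d))

noncomputable def bepScore (u : Fin d → ℝ) : ℝ := ⨆ j, boolSign (B y j) * u j

variable {B y}

lemma psiBEP_eq (u : Fin d → ℝ) : psiBEP d B y u = max (bepScore B y u + 1) 0 := rfl

lemma psiBEP_nonneg (u : Fin d → ℝ) : 0 ≤ psiBEP d B y u := le_max_right _ _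

lemma boolSign_mul_le_bepScore (u : Fin d → ℝ) (j : Fin d) :
    boolSign (B y j) * u j ≤ bepScore B y u :=
  le_ciSup (f := fun j => boolSign (B y j) * u j) (Set.finite_range _).bddAbove j

lemma bepScore_le_iff [Nonempty (Fin d)] {u : Fin d → ℝ} {c : ℝ} :
    bepScore B y u ≤ c ↔ ∀ j, boolSign (B y j) * u j ≤ c :=
  ciSup_le_iff (Set.finite_range _).bddAbove

lemma psiBEP_le_add_of_bepScore_le {u v : Fin d → ℝ} {s : ℝ} (hs : 0 ≤ s)
    (h : bepScore B y v ≤ bepScore B y u + s) : psiBEP d B y v ≤ psiBEP d B y u + s := by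
  simp only [psiBEP_eq]
  exact max_le (by linarith [le_max_left (bepScore B y u + 1) 0]) (by positivity)

lemma psiBEP_add_le_of_bepScore_le {u v : Fin d → ℝ} {s : ℝ} (hs0 : 0 ≤ s)
    (hs : s ≤ bepScore B y u + 1) (h : bepScore B y v ≤ bepScore B y u - s) :
    psiBEP d B y v + s ≤ psiBEP d B y u := by
  simp only [psiBEP_eq]
  rw [max_eq_left (by linarith : (0 : ℝ) ≤ bepScore B y u + 1), ← le_sub_iff_add_le]
  exact max_le (by linarith) (by linarith)

lemma psiBEP_le_add_of_abs_sub_le [Nonempty (Fin d)] {u v : Fin d → ℝ} {s : ℝ}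
    (h : ∀ j, |v j - u j| ≤ s) : psiBEP d B y v ≤ psiBEP d B y u + s := by
  have hs : 0 ≤ s := (abs_nonneg _).trans (h (Classical.arbitrary _))
  refine psiBEP_le_add_of_bepScore_le hs (bepScore_le_iff.2 fun j => ?_)
  have hj : boolSign (B y j) * (v j - u j) ≤ s := by
    calc _ ≤ |boolSign (B y j) * (v j - u j)| := le_abs_self _
      _ ≤ s := by rw [abs_mul, abs_boolSign, one_mul]; exact h j
  linarith [boolSign_mul_le_bepScore (B := B) (y := y) u j]

lemma psiBEP_sub_boolSign_add_le [Nonempty (Fin d)] {u : Fin d → ℝ} {m : ℝ} (hm0 : 0 ≤ m)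
    (hm : m ≤ bepScore B y u + 1) :
    psiBEP d B y (u - m • fun j => boolSign (B y j)) + m ≤ psiBEP d B y u := by
  refine psiBEP_add_le_of_bepScore_le hm0 hm (bepScore_le_iff.2 fun j => ?_)
  have hsq : boolSign (B y j) * boolSign (B y j) = 1 := by simp [boolSign_mul_boolSign]
  have hj : boolSign (B y j) * (u j - m * boolSign (B y j)) = boolSign (B y j) * u j - m := by
    linear_combination (-m) * hsq
  simp only [Pi.sub_apply, Pi.smul_apply, smul_eq_mul, hj]
  linarith [boolSign_mul_le_bepScore (B := B) (y := y) u j]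

lemma psiBEP_zero [Nonempty (Fin d)] : psiBEP d B y 0 = 1 := by
  simp [psiBEP_eq, bepScore]

end Score

lemma neg_abs_le_boolSign_mul (b : Bool) (x : ℝ) : -|x| ≤ boolSign b * x := by
  simpa [abs_mul, abs_boolSign] using neg_abs_le (boolSign b * x)

lemma abstainLoss_last {n : ℕ} (α : ℝ) (y : Fin n) : abstainLoss n α y (Fin.last n) = α :=
  if_pos rfl

lemma abstainLoss_castSucc {n : ℕ} (α : ℝ) (y y₀ : Fin n) :
    abstainLoss n α y (Fin.castSucc y₀) = if y₀ = y then 0 else 1 := by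
  simp [abstainLoss, (Fin.castSucc_lt_last y₀).ne, Fin.val_eq_val]

lemma abstainLoss_nonneg {n : ℕ} {α : ℝ} (hα : 0 ≤ α) (y : Fin n) (t : Fin (n + 1)) :
    0 ≤ abstainLoss n α y t := by
  unfold abstainLoss; split_ifs <;> norm_num [hα]

section Prediction

variable {d : ℕ} {B : Fin (2 ^ d) ≃ (Fin d → Bool)} {y : Fin (2 ^ d)} {u : Fin d → ℝ} {τ : ℝ}

lemma neg_le_bepScore_of_iInf_abs_le [Nonempty (Fin d)] (h : (⨅ j, |u j|) ≤ τ) :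
    -τ ≤ bepScore B y u := by
  have : -bepScore B y u ≤ ⨅ j, |u j| := le_ciInf fun j => by
    linarith [neg_abs_le_boolSign_mul (B y j) (u j), boolSign_mul_le_bepScore (B := B) (y := y) u j]
  linarith

lemma lt_abs_of_lt_iInf_abs (h : τ < ⨅ j, |u j|) (j : Fin d) : τ < |u j| :=
  h.trans_le (ciInf_le (Set.finite_range _).bddBelow j)

lemma lt_bepScore_of_ne_symm_signNeg (hu : ∀ j, τ < |u j|) (hy : y ≠ B.symm (signNeg d u)) :
    τ < bepScore B y u := by
  obtain ⟨j, hj⟩ : ∃ j, B y j ≠ signNeg d u j := by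
    by_contra! h
    exact hy (B.eq_symm_apply.2 (funext h))
  calc τ < |u j| := hu j
    _ = boolSign (B y j) * u j := by rw [boolSign_mul_eq, if_neg hj]
    _ ≤ bepScore B y u := boolSign_mul_le_bepScore u j

-- Every `|u j|` exceeds `τ ≥ m`, so the coordinates where `y` agrees with the prediction stay
-- below `τ - δ < bepScore B y u - δ`, while `hc` makes each of the others drop by at least `δ`.
lemma psiBEP_sub_add_le_of_ne_symm_signNeg [Nonempty (Fin d)] {m δ : ℝ} {c : Fin d → ℝ}
    (hmτ : m ≤ τ) (hδ0 : 0 ≤ δ) (hδ1 : δ ≤ 1 + τ) (hu : ∀ j, τ < |u j|)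
    (hy : y ≠ B.symm (signNeg d u)) (hc : ∀ j, δ ≤ m * (1 + boolSign (B y j) * c j)) :
    psiBEP d B y (u - m • (c - fun j => boolSign (signNeg d u j))) + δ ≤ psiBEP d B y u := by
  have hτ := lt_bepScore_of_ne_symm_signNeg hu hy
  refine psiBEP_add_le_of_bepScore_le hδ0 (by linarith) (bepScore_le_iff.2 fun j => ?_)
  have hexp : boolSign (B y j) * (u - m • (c - fun j => boolSign (signNeg d u j))) j =
      boolSign (B y j) * u j - m * (boolSign (B y j) * c j) +
        m * (boolSign (B y j) * boolSign (signNeg d u j)) := by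
    simp only [Pi.sub_apply, Pi.smul_apply, smul_eq_mul]; ring
  have hle := boolSign_mul_le_bepScore (B := B) (y := y) u j
  rw [boolSign_mul_eq] at hle
  rw [hexp, boolSign_mul_boolSign, boolSign_mul_eq]
  have := hc j
  have := hu j
  split_ifs at hle ⊢ <;> linarith

end Prediction

section Witness

variable {d : ℕ} (B : Fin (2 ^ d) ≃ (Fin d → Bool))

noncomputable def bepCode : Fin (2 ^ d + 1) → Fin d → ℝ :=
  Fin.lastCases 0 fun y j => boolSign (B y j)

noncomputable def bepWitness (τ m : ℝ) (u : Fin d → ℝ) (t : Fin (2 ^ d + 1)) : Fin d → ℝ :=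
  u - m • (bepCode B t - bepCode B (predBEP d B τ u))

variable {B} {τ m : ℝ} {u : Fin d → ℝ}

lemma bepWitness_of_iInf_abs_le (h : (⨅ j, |u j|) ≤ τ) (t : Fin (2 ^ d + 1)) :
    bepWitness B τ m u t = u - m • bepCode B t := by
  simp [bepWitness, predBEP, h, bepCode]

lemma bepWitness_of_lt_iInf_abs (h : τ < ⨅ j, |u j|) (t : Fin (2 ^ d + 1)) :
    bepWitness B τ m u t = u - m • (bepCode B t - fun j => boolSign (signNeg d u j)) := by
  simp [bepWitness, predBEP, h.not_ge, bepCode]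

variable [Nonempty (Fin d)]

lemma abstainLoss_predBEP_add_psiBEP_bepWitness_le_of_iInf_abs_le (hm0 : 0 ≤ m)
    (hm1 : m ≤ 1 - τ) (h : (⨅ j, |u j|) ≤ τ) (t : Fin (2 ^ d + 1)) (y : Fin (2 ^ d)) :
    2 * m * abstainLoss (2 ^ d) (1/2) y (predBEP d B τ u) + psiBEP d B y (bepWitness B τ m u t)
      ≤ psiBEP d B y u + 2 * m * abstainLoss (2 ^ d) (1/2) y t := by
  rw [bepWitness_of_iInf_abs_le h, predBEP, if_pos h, abstainLoss_last]
  induction t using Fin.lastCases with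
  | last =>
    simp only [bepCode, Fin.lastCases_last, smul_zero, sub_zero, abstainLoss_last]
    linarith
  | cast y₀ =>
    simp only [bepCode, Fin.lastCases_castSucc, abstainLoss_castSucc]
    split_ifs with hy
    · subst hy
      have := psiBEP_sub_boolSign_add_le (B := B) hm0
        (by linarith [neg_le_bepScore_of_iInf_abs_le (B := B) (y := y₀) h])
      linarith
    · have := psiBEP_le_add_of_abs_sub_le (B := B) (y := y) (u := u)
        (v := u - m • fun j => boolSign (B y₀ j)) (s := m) fun j => by
          simp [abs_mul, abs_boolSign, abs_of_nonneg hm0]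
      linarith

lemma psiBEP_symm_signNeg_bepWitness_le (hm0 : 0 ≤ m) (h : τ < ⨅ j, |u j|)
    (t : Fin (2 ^ d + 1)) :
    psiBEP d B (B.symm (signNeg d u)) (bepWitness B τ m u t) ≤
      psiBEP d B (B.symm (signNeg d u)) u +
        2 * m * abstainLoss (2 ^ d) (1/2) (B.symm (signNeg d u)) t := by
  refine psiBEP_le_add_of_abs_sub_le fun j => ?_
  rw [bepWitness_of_lt_iInf_abs h, Pi.sub_apply, sub_sub_cancel_left, abs_neg, Pi.smul_apply,
    smul_eq_mul, abs_mul, abs_of_nonneg hm0]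
  induction t using Fin.lastCases with
  | last =>
    simp only [bepCode, Fin.lastCases_last, abstainLoss_last, Pi.sub_apply, Pi.zero_apply,
      zero_sub, abs_neg, abs_boolSign]
    linarith
  | cast y₀ =>
    simp only [bepCode, Fin.lastCases_castSucc, abstainLoss_castSucc, Pi.sub_apply]
    split_ifs with hy₀
    · simp [hy₀]
    · have : |boolSign (B y₀ j) - boolSign (signNeg d u j)| ≤ 2 := by
        cases B y₀ j <;> cases signNeg d u j <;> norm_num [boolSign]
      nlinarith

lemma psiBEP_bepWitness_add_le_of_ne_symm_signNeg (hm0 : 0 ≤ m) (hmτ : m ≤ τ)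
    (hm1 : m ≤ 1 - τ) (h : τ < ⨅ j, |u j|) {y : Fin (2 ^ d)} (hy : y ≠ B.symm (signNeg d u))
    (t : Fin (2 ^ d + 1)) :
    psiBEP d B y (bepWitness B τ m u t) + 2 * m ≤
      psiBEP d B y u + 2 * m * abstainLoss (2 ^ d) (1/2) y t := by
  have hu := lt_abs_of_lt_iInf_abs h
  have hτ : 0 ≤ τ := hm0.trans hmτ
  rw [bepWitness_of_lt_iInf_abs h]
  induction t using Fin.lastCases with
  | last =>
    have := psiBEP_sub_add_le_of_ne_symm_signNeg (c := 0) (δ := m) hmτ hm0 (by linarith) hu hy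
      (by simp)
    rw [abstainLoss_last]
    simp only [bepCode, Fin.lastCases_last] at this ⊢
    linarith
  | cast y₀ =>
    simp only [bepCode, Fin.lastCases_castSucc, abstainLoss_castSucc]
    split_ifs with hy₀
    · subst hy₀
      have := psiBEP_sub_add_le_of_ne_symm_signNeg (δ := 2 * m)
        (c := fun j => boolSign (B y₀ j)) hmτ (by linarith) (by linarith) hu hy
        fun j => by simp [boolSign_mul_boolSign]; linarith
      linarith
    · have := psiBEP_sub_add_le_of_ne_symm_signNeg (δ := 0)
        (c := fun j => boolSign (B y₀ j)) hmτ le_rfl (by linarith) hu hy fun j => by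
          rw [boolSign_mul_boolSign]
          split_ifs <;> linarith
      linarith

lemma abstainLoss_predBEP_add_psiBEP_bepWitness_le_of_lt_iInf_abs (hm0 : 0 ≤ m)
    (hmτ : m ≤ τ) (hm1 : m ≤ 1 - τ) (h : τ < ⨅ j, |u j|) (t : Fin (2 ^ d + 1))
    (y : Fin (2 ^ d)) :
    2 * m * abstainLoss (2 ^ d) (1/2) y (predBEP d B τ u) + psiBEP d B y (bepWitness B τ m u t)
      ≤ psiBEP d B y u + 2 * m * abstainLoss (2 ^ d) (1/2) y t := by
  rw [predBEP, if_neg h.not_ge, abstainLoss_castSucc]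
  split_ifs with hys
  · subst hys
    linarith [psiBEP_symm_signNeg_bepWitness_le (B := B) hm0 h t]
  · linarith [psiBEP_bepWitness_add_le_of_ne_symm_signNeg hm0 hmτ hm1 h (Ne.symm hys) t]

theorem abstainLoss_predBEP_add_psiBEP_bepWitness_le (hm0 : 0 ≤ m)
    (hmτ : m ≤ τ) (hm1 : m ≤ 1 - τ) (u : Fin d → ℝ) (t : Fin (2 ^ d + 1)) (y : Fin (2 ^ d)) :
    2 * m * abstainLoss (2 ^ d) (1/2) y (predBEP d B τ u) + psiBEP d B y (bepWitness B τ m u t)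
      ≤ psiBEP d B y u + 2 * m * abstainLoss (2 ^ d) (1/2) y t := by
  rcases le_or_gt (⨅ j, |u j|) τ with h | h
  · exact abstainLoss_predBEP_add_psiBEP_bepWitness_le_of_iInf_abs_le hm0 hm1 h t y
  · exact abstainLoss_predBEP_add_psiBEP_bepWitness_le_of_lt_iInf_abs hm0 hmτ hm1 h t y

end Witness

section Measurability

variable {d : ℕ} {B : Fin (2 ^ d) ≃ (Fin d → Bool)} {τ m : ℝ}

lemma measurable_signNeg : Measurable (signNeg d) :=
  measurable_pi_iff.2 fun j => measurable_to_bool <| by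
    have : MeasurableSet {u : Fin d → ℝ | u j ≤ 0} :=
      measurableSet_le (measurable_pi_apply j) measurable_const
    simpa [signNeg, Set.preimage] using this

lemma measurable_predBEP : Measurable (predBEP d B τ) :=
  Measurable.ite (measurableSet_le (Measurable.iInf fun j => (measurable_pi_apply j).abs)
    measurable_const) measurable_const
    ((measurable_of_countable fun v => Fin.castSucc (B.symm v)).comp measurable_signNeg)

lemma Measurable.bepWitness {X : Type*} [MeasurableSpace X] {f : X → Fin d → ℝ}
    {h : X → Fin (2 ^ d + 1)} (hf : Measurable f) (hh : Measurable h) :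
    Measurable fun x => bepWitness B τ m (f x) (h x) :=
  hf.sub ((((measurable_of_countable _).comp hh).sub
    ((measurable_of_countable _).comp (measurable_predBEP.comp hf))).const_smul m)

lemma measurable_psiBEP (y : Fin (2 ^ d)) : Measurable (psiBEP d B y) :=
  ((Measurable.iSup fun j => measurable_const.mul (measurable_pi_apply j)).add_const 1).max
    measurable_const

end Measurability

lemma ofReal_mul_lintegral_add_le {Z : Type*} [MeasurableSpace Z] {μ : Measure Z} {k : ℝ}
    (hk : 0 ≤ k) {a b c e : Z → ℝ} (ha : ∀ z, 0 ≤ a z) (hb : ∀ z, 0 ≤ b z) (hc : Measurable c)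
    (h : ∀ z, k * a z + b z ≤ c z + k * e z) :
    ENNReal.ofReal k * ∫⁻ z, ENNReal.ofReal (a z) ∂μ + ∫⁻ z, ENNReal.ofReal (b z) ∂μ ≤
      ∫⁻ z, ENNReal.ofReal (c z) ∂μ + ENNReal.ofReal k * ∫⁻ z, ENNReal.ofReal (e z) ∂μ := by
  rw [← lintegral_const_mul' _ _ ENNReal.ofReal_ne_top,
    ← lintegral_const_mul' _ _ ENNReal.ofReal_ne_top]
  calc _ ≤ ∫⁻ z, ENNReal.ofReal k * ENNReal.ofReal (a z) + ENNReal.ofReal (b z) ∂μ :=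
        le_lintegral_add _ _
    _ ≤ ∫⁻ z, ENNReal.ofReal (c z) + ENNReal.ofReal k * ENNReal.ofReal (e z) ∂μ :=
        lintegral_mono fun z => by
          rw [← ENNReal.ofReal_mul hk, ← ENNReal.ofReal_mul hk,
            ← ENNReal.ofReal_add (mul_nonneg hk (ha z)) (hb z)]
          exact (ENNReal.ofReal_le_ofReal (h z)).trans ENNReal.ofReal_add_le
    _ = _ := lintegral_add_left hc.ennreal_ofReal _

lemma ENNReal.sub_iInf_le_div_of_forall_exists {ι κ : Type*} {a c k : ℝ≥0∞}
    {L : ι → ℝ≥0∞} {R : κ → ℝ≥0∞} (hk0 : k ≠ 0) (hk : k ≠ ∞) (hR : ⨅ j, R j ≠ ∞)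
    (h : ∀ i, ∃ j, k * a + R j ≤ c + k * L i) :
    a - ⨅ i, L i ≤ (c - ⨅ j, R j) / k := by
  rw [tsub_le_iff_right, ENNReal.add_iInf]
  refine le_iInf fun i => ?_
  obtain ⟨j, hj⟩ := h i
  have hka : k * a ≤ (c - ⨅ j, R j) + k * L i :=
    calc k * a ≤ c + k * L i - ⨅ j, R j :=
          ENNReal.le_sub_of_add_le_right hR ((add_le_add le_rfl (iInf_le R j)).trans hj)
      _ ≤ (c - ⨅ j, R j) + k * L i := add_tsub_le_tsub_add
  rwa [← ENNReal.mul_le_mul_iff_right hk0 hk, mul_add, ENNReal.mul_div_cancel hk0 hk]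

theorem psiBEP_excess_risk_bound (d : ℕ) (hd : 1 ≤ d) (B : Fin (2 ^ d) ≃ (Fin d → Bool))
    (τ : ℝ) (hτ0 : 0 < τ) (hτ1 : τ < 1)
    {X : Type*} [MeasurableSpace X] (D : Measure (X × Fin (2 ^ d)))
    [IsProbabilityMeasure D]
    (f : X → Fin d → ℝ) (hf : Measurable f) :
    (∫⁻ z, ENNReal.ofReal (abstainLoss (2 ^ d) (1/2) z.2 (predBEP d B τ (f z.1))) ∂D) -
      (⨅ h : {h : X → Fin (2 ^ d + 1) // Measurable h},
        ∫⁻ z, ENNReal.ofReal (abstainLoss (2 ^ d) (1/2) z.2 (h.1 z.1)) ∂D) ≤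
    ((∫⁻ z, ENNReal.ofReal (psiBEP d B z.2 (f z.1)) ∂D) -
      (⨅ g : {g : X → Fin d → ℝ // Measurable g},
        ∫⁻ z, ENNReal.ofReal (psiBEP d B z.2 (g.1 z.1)) ∂D)) /
      ENNReal.ofReal (2 * min τ (1 - τ)) := by
  have : Nonempty (Fin d) := ⟨⟨0, hd⟩⟩
  have hm : 0 < min τ (1 - τ) := lt_min hτ0 (by linarith)
  refine ENNReal.sub_iInf_le_div_of_forall_exists (ENNReal.ofReal_pos.2 (by linarith)).ne'
    ENNReal.ofReal_ne_top ?_ fun h => ?_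
  · refine ne_top_of_le_ne_top ENNReal.one_ne_top (iInf_le_of_le ⟨0, measurable_const⟩ ?_)
    simp [psiBEP_zero]
  · refine ⟨⟨fun x => bepWitness B τ (min τ (1 - τ)) (f x) (h.1 x), hf.bepWitness h.2⟩, ?_⟩
    exact ofReal_mul_lintegral_add_le (by linarith) (fun _ => abstainLoss_nonneg (by norm_num) _ _)
      (fun _ => psiBEP_nonneg _)
      (measurable_from_prod_countable_left fun y => (measurable_psiBEP y).comp hf)
      fun _ => abstainLoss_predBEP_add_psiBEP_bepWitness_le hm.le (min_le_left _ _)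
        (min_le_right _ _) _ _ _
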